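/- Assume 0 < p_1 < 1 and ∑_k (1−p_1)⋯(1−p_k) < ∞. There exist constants 0 < C₁ < C₂ < ∞ such that for all n ≥ 0, C₁ ∑_{m>n} ℙ(ξ > m) ≤ ℙ(μ > n | μ < ∞) ≤ C₂ ∑_{m>n} ℙ(ξ > m), where ℙ(ξ > m) = (1−p_1)⋯(1−p_m). -/

import Mathlib

open MeasureTheory ProbabilityTheory Filter

/-- Configuration: edge indicators. -/
abbrev Cfg := ℤ → ℤ → Bool

/-- There is an edge from `i` to `j`. -/
def Edge (ω : Cfg) (i j : ℤ) : Prop := i < j ∧ ω i j = true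

/-- There is a directed path from `i` to `j`. -/
def Leads (ω : Cfg) : ℤ → ℤ → Prop := Relation.TransGen (Edge ω)

/-- A list of vertices forming a path inside `{a,...,b}`. -/
def IsPathIn (ω : Cfg) (a b : ℤ) (l : List ℤ) : Prop :=
  l ≠ [] ∧ l.Chain' (Edge ω) ∧ ∀ x ∈ l, a ≤ x ∧ x ≤ b

/-- `L ω a b`: maximal number of edges of a path contained in `{a,...,b}`. -/
noncomputable def L (ω : Cfg) (a b : ℤ) : ℕ :=
  sSup {n | ∃ l : List ℤ, IsPathIn ω a b l ∧ l.length = n + 1}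

/-- `T ω i j`: maximal number of edges of a path from `i` to `j` (0 if none). -/
noncomputable def T (ω : Cfg) (i j : ℤ) : ℕ :=
  sSup {n | ∃ l : List ℤ, l.Chain' (Edge ω) ∧ l.head? = some i ∧
    l.getLast? = some j ∧ l.length = n + 1}

/-- The skeleton of the graph. -/
def Skel (ω : Cfg) : Set ℤ :=
  {n | (∀ j, n < j → Leads ω n j) ∧ (∀ j, j < n → Leads ω j n)}

/-- The model hypotheses: independent edges, edge `(i,j)` present w.p. `p (j-i)`. -/
def GraphModel (p : ℕ → ℝ) (μ : Measure Cfg) : Prop :=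
  IsProbabilityMeasure μ ∧
  iIndepFun (β := fun _ : ℤ × ℤ => Bool)
    (fun e ω => ω e.1 e.2) μ ∧
  (∀ i j : ℤ, i < j → μ {ω | ω i j = true} = ENNReal.ofReal (p (j - i).toNat)) ∧
  (∀ i j : ℤ, j ≤ i → μ {ω | ω i j = true} = 0)

/-!
Given that `-1, …, -(k-1)` all lead to `0`, the vertex `-k` leads to `0` iff it has an edge
landing in `{-k+1, …, 0}`; this event depends only on the edges out of `-k` and has probability
`1 - ℙ(ξ > k)`. Hence `ℙ(μ > n) = P n := ∏_{k ≤ n} (1 - ℙ(ξ > k))`, which decreases to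
`L = ℙ(μ = ∞)`, positive because `∑ ℙ(ξ > k) < ∞`. Telescoping,
`ℙ(n < μ < ∞) = P n - L = ∑_{k ≥ n} P k ℙ(ξ > k + 1)`, and `L ≤ P k ≤ 1`; dividing by
`ℙ(μ < ∞) = 1 - L` gives the bounds with `C₁ = L / (1 - L)` and `C₂ = 1 / (1 - L)`.
-/

open Finset Topology Function

namespace ProbabilityTheory

variable {Ω ι κ : Type*} {mΩ : MeasurableSpace Ω} {μ : Measure Ω} {m : ι → MeasurableSpace Ω}

lemma iIndep.measure_biInter_of_pairwise_disjoint (h_le : ∀ i, m i ≤ mΩ) (h : iIndep m μ)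
    {S : κ → Set ι} (hS : Pairwise (Disjoint on S)) {E : κ → Set Ω}
    (hE : ∀ k, MeasurableSet[⨆ i ∈ S k, m i] (E k)) (s : Finset κ) :
    μ (⋂ k ∈ s, E k) = ∏ k ∈ s, μ (E k) := by
  classical
  induction s using Finset.induction_on with
  | empty => simpa using h.meas_biInter (S := (∅ : Finset ι)) (s := fun _ => Set.univ) (by simp)
  | insert a s ha ih =>
    have hdisj : Disjoint (S a) (⋃ k ∈ s, S k) :=
      Set.disjoint_iUnion₂_right.2 fun k hk => hS (ne_of_mem_of_not_mem hk ha).symm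
    have hrest : MeasurableSet[⨆ i ∈ ⋃ k ∈ s, S k, m i] (⋂ k ∈ s, E k) :=
      .biInter s.countable_toSet fun k hk =>
        biSup_mono (f := m) (fun i hi => Set.mem_biUnion hk hi) _ (hE k)
    rw [set_biInter_insert, prod_insert ha, ← ih,
      (Indep_iff _ _ μ).1 (indep_iSup_of_disjoint h_le h hdisj) _ _ (hE a) hrest]

end ProbabilityTheory

section InfiniteProduct

variable {g : ℕ → ℝ}

lemma prod_range_one_sub_nonneg (hg₁ : ∀ k, g k ≤ 1) (n : ℕ) : 0 ≤ ∏ k ∈ range n, (1 - g k) :=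
  prod_nonneg fun k _ => sub_nonneg.2 (hg₁ k)

lemma prod_range_one_sub_le_one (hg₀ : ∀ k, 0 ≤ g k) (hg₁ : ∀ k, g k ≤ 1) (n : ℕ) :
    ∏ k ∈ range n, (1 - g k) ≤ 1 :=
  prod_le_one (fun k _ => sub_nonneg.2 (hg₁ k)) fun k _ => sub_le_self _ (hg₀ k)

lemma antitone_prod_range_one_sub (hg₀ : ∀ k, 0 ≤ g k) (hg₁ : ∀ k, g k ≤ 1) :
    Antitone fun n => ∏ k ∈ range n, (1 - g k) :=
  antitone_nat_of_succ_le fun n => by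
    rw [prod_range_succ]
    exact mul_le_of_le_one_right (prod_range_one_sub_nonneg hg₁ n) (sub_le_self _ (hg₀ n))

lemma exists_tendsto_prod_range_one_sub_pos (hg₁ : ∀ k, g k < 1) (hg : Summable g) :
    ∃ L, 0 < L ∧ Tendsto (fun n => ∏ k ∈ range n, (1 - g k)) atTop (𝓝 L) := by
  have hlog : Summable fun k => Real.log (1 - g k) := by
    simpa [sub_eq_add_neg] using Real.summable_log_one_add_of_summable hg.neg
  exact ⟨_, Real.exp_pos _,
    (Real.hasProd_of_hasSum_log (fun k => sub_pos.2 (hg₁ k)) hlog.hasSum).tendsto_prod_nat⟩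

lemma hasSum_prod_range_one_sub_mul (hg₀ : ∀ k, 0 ≤ g k) (hg₁ : ∀ k, g k ≤ 1) {L : ℝ}
    (hL : Tendsto (fun n => ∏ k ∈ range n, (1 - g k)) atTop (𝓝 L)) (n : ℕ) :
    HasSum (fun m => (∏ k ∈ range (n + m), (1 - g k)) * g (n + m))
      ((∏ k ∈ range n, (1 - g k)) - L) := by
  have hstep : ∀ j, (∏ k ∈ range j, (1 - g k)) * g j =
      (∏ k ∈ range j, (1 - g k)) - ∏ k ∈ range (j + 1), (1 - g k) := fun j => by
    rw [prod_range_succ]; ring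
  have hpartial : ∀ N, ∑ m ∈ range N, (∏ k ∈ range (n + m), (1 - g k)) * g (n + m) =
      (∏ k ∈ range n, (1 - g k)) - ∏ k ∈ range (n + N), (1 - g k) := fun N => by
    simp_rw [hstep]
    exact sum_range_sub' (fun m => ∏ k ∈ range (n + m), (1 - g k)) N
  refine (hasSum_iff_tendsto_nat_of_nonneg
    (fun m => mul_nonneg (prod_range_one_sub_nonneg hg₁ _) (hg₀ _)) _).2 ?_
  simp only [hpartial]
  exact tendsto_const_nhds.sub (hL.comp (tendsto_atTop_mono (Nat.le_add_left · n) tendsto_id))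

theorem prod_range_one_sub_sub_mem_Icc (hg₀ : ∀ k, 0 ≤ g k) (hg₁ : ∀ k, g k ≤ 1)
    (hg : Summable g) {L : ℝ} (hL : Tendsto (fun n => ∏ k ∈ range n, (1 - g k)) atTop (𝓝 L))
    (n : ℕ) :
    (∏ k ∈ range n, (1 - g k)) - L ∈ Set.Icc (L * ∑' m, g (n + m)) (∑' m, g (n + m)) := by
  have hsum : HasSum (fun m => g (n + m)) (∑' m, g (n + m)) := by
    simpa only [add_comm] using ((summable_nat_add_iff n).2 hg).hasSum
  have hP := hasSum_prod_range_one_sub_mul hg₀ hg₁ hL n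
  have hLP := (antitone_prod_range_one_sub hg₀ hg₁).le_of_tendsto hL
  refine ⟨?_, hasSum_le (fun m => ?_) hP hsum⟩
  · exact hasSum_le (fun m => mul_le_mul_of_nonneg_right (hLP _) (hg₀ _)) (hsum.mul_left L) hP
  · exact mul_le_of_le_one_left (hg₀ _) (prod_range_one_sub_le_one hg₀ hg₁ _)

end InfiniteProduct

lemma Leads.lt {ω : Cfg} {a b : ℤ} (h : Leads ω a b) : a < b := by
  induction h with
  | single h => exact h.1
  | tail _ h ih => exact ih.trans h.1

/-- `ℙ(ξ > k)`. -/
def xiTail (p : ℕ → ℝ) (k : ℕ) : ℝ := ∏ m ∈ Icc 1 k, (1 - p m)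

/-- An edge out of `-k`, of length `m`, that does not jump over `0`. -/
def rowEvent (k : ℕ) : Set Cfg := {ω | ∃ m ∈ Icc 1 k, ω (-k) (m - k) = true}

/-- The event `{μ > n}`. -/
def leadsUpTo (n : ℕ) : Set Cfg := {ω | ∀ k : ℕ, 1 ≤ k → k ≤ n → Leads ω (-k) 0}

/-- The event `{μ = ∞}`. -/
def leadsAll : Set Cfg := ⋂ n, leadsUpTo n

lemma mem_rowEvent_of_leads {ω : Cfg} {k : ℕ} (h : Leads ω (-k) 0) : ω ∈ rowEvent k := by
  obtain ⟨b, hedge, hb⟩ := Relation.TransGen.head'_iff.1 h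
  have hb0 : b ≤ 0 := by
    rcases Relation.reflTransGen_iff_eq_or_transGen.1 hb with rfl | hb
    exacts [le_rfl, (Leads.lt hb).le]
  have hkb := hedge.1
  have hb' : ((b + k).toNat : ℤ) - k = b := by omega
  exact ⟨(b + k).toNat, mem_Icc.2 ⟨by omega, by omega⟩, by rw [hb']; exact hedge.2⟩

lemma leads_of_forall_mem_rowEvent {ω : Cfg} {k : ℕ} (hk : 1 ≤ k)
    (h : ∀ j, 1 ≤ j → j ≤ k → ω ∈ rowEvent j) : Leads ω (-k) 0 := by
  induction k using Nat.strong_induction_on with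
  | _ k ih =>
    obtain ⟨m, hm, hω⟩ := h k hk le_rfl
    obtain ⟨hm1, hmk⟩ := mem_Icc.1 hm
    have hedge : Edge ω (-k) (m - k) := ⟨by omega, hω⟩
    rcases hmk.eq_or_lt with rfl | hlt
    · exact .single (by simpa using hedge)
    · have hrest : Leads ω (-(k - m : ℕ)) 0 :=
        ih (k - m) (by omega) (by omega) fun j hj1 hjk => h j hj1 (by omega)
      exact .head hedge (by simpa [Nat.cast_sub hlt.le] using hrest : Leads ω (m - k) 0)

lemma leadsUpTo_eq_biInter_rowEvent (n : ℕ) : leadsUpTo n = ⋂ k ∈ range n, rowEvent (k + 1) := by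
  ext ω
  simp only [leadsUpTo, Set.mem_ofPred_eq, Set.mem_iInter, mem_range]
  refine ⟨fun h k hk => mem_rowEvent_of_leads (h _ (by omega) hk), fun h k hk hkn => ?_⟩
  refine leads_of_forall_mem_rowEvent hk fun j hj1 hjk => ?_
  simpa [Nat.sub_add_cancel hj1] using h (j - 1) (by omega)

lemma measurableSet_rowEvent_row (k : ℕ) :
    MeasurableSet[⨆ e ∈ {e : ℤ × ℤ | e.1 = -k},
      MeasurableSpace.comap (fun ω : Cfg => ω e.1 e.2) inferInstance] (rowEvent k) := by
  have : rowEvent k = ⋃ m ∈ Icc 1 k, (fun ω : Cfg => ω (-k) (m - k)) ⁻¹' {true} := by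
    ext ω; simp [rowEvent]
  rw [this]
  exact .biUnion (Icc 1 k).countable_toSet fun m _ =>
    le_iSup₂ (f := fun (e : ℤ × ℤ) (_ : e.1 = -k) =>
      MeasurableSpace.comap (fun ω : Cfg => ω e.1 e.2) inferInstance)
      ((-k : ℤ), (m : ℤ) - k) rfl _ ⟨{true}, trivial, rfl⟩

lemma measurable_edge (i j : ℤ) : Measurable fun ω : Cfg => ω i j :=
  (measurable_pi_apply j).comp (measurable_pi_apply i)

lemma measurableSet_rowEvent (k : ℕ) : MeasurableSet (rowEvent k) := by
  have hle : (⨆ e ∈ {e : ℤ × ℤ | e.1 = -k},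
      MeasurableSpace.comap (fun ω : Cfg => ω e.1 e.2) inferInstance) ≤ MeasurableSpace.pi :=
    iSup₂_le fun e _ => (measurable_edge e.1 e.2).comap_le
  exact hle _ (measurableSet_rowEvent_row k)

lemma measurableSet_leadsUpTo (n : ℕ) : MeasurableSet (leadsUpTo n) := by
  rw [leadsUpTo_eq_biInter_rowEvent]
  exact .biInter (range n).countable_toSet fun k _ => measurableSet_rowEvent (k + 1)

lemma leadsAll_subset_leadsUpTo (n : ℕ) : leadsAll ⊆ leadsUpTo n := Set.iInter_subset _ n

section Model

variable {p : ℕ → ℝ} {μ : Measure Cfg}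

lemma xiTail_nonneg (hp : ∀ k, 0 ≤ p k ∧ p k < 1) (k : ℕ) : 0 ≤ xiTail p k :=
  prod_nonneg fun m _ => sub_nonneg.2 (hp m).2.le

lemma xiTail_le_one (hp : ∀ k, 0 ≤ p k ∧ p k < 1) (k : ℕ) : xiTail p k ≤ 1 :=
  prod_le_one (fun m _ => sub_nonneg.2 (hp m).2.le) fun m _ => sub_le_self _ (hp m).1

lemma xiTail_succ_lt_one (hp : ∀ k, 0 ≤ p k ∧ p k < 1) (hp1 : 0 < p 1) (k : ℕ) :
    xiTail p (k + 1) < 1 := by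
  rw [xiTail, ← mul_prod_erase _ _ (by simp : 1 ∈ Icc 1 (k + 1))]
  refine (mul_le_of_le_one_right (sub_nonneg.2 (hp 1).2.le) ?_).trans_lt (by linarith)
  exact prod_le_one (fun m _ => sub_nonneg.2 (hp m).2.le) fun m _ => sub_le_self _ (hp m).1

lemma measure_edge_absent (hp : ∀ k, 0 ≤ p k ∧ p k < 1) (hm : GraphModel p μ) {i j : ℤ}
    (hij : i < j) : μ {ω | ω i j = false} = ENNReal.ofReal (1 - p (j - i).toNat) := by
  have := hm.1
  have hc : {ω : Cfg | ω i j = false} = {ω | ω i j = true}ᶜ := by ext; simp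
  have hmeas : MeasurableSet {ω : Cfg | ω i j = true} :=
    measurable_edge i j (measurableSet_singleton true)
  rw [hc, prob_compl_eq_one_sub hmeas,
    hm.2.2.1 i j hij, ENNReal.ofReal_sub _ (hp _).1, ENNReal.ofReal_one]

lemma measure_rowEvent (hp : ∀ k, 0 ≤ p k ∧ p k < 1) (hm : GraphModel p μ) (k : ℕ) :
    μ (rowEvent k) = ENNReal.ofReal (1 - xiTail p k) := by
  have := hm.1
  have hrow : iIndepFun (fun (m : ℕ) (ω : Cfg) => ω (-k) (m - k)) μ :=
    hm.2.1.precomp (g := fun m : ℕ => ((-k : ℤ), (m : ℤ) - k)) fun a b h => by simpa using h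
  have hc : (rowEvent k)ᶜ = ⋂ m ∈ Icc 1 k, {ω : Cfg | ω (-k) (m - k) = false} := by
    ext ω; simp [rowEvent]
  have hcompl : μ (rowEvent k)ᶜ = ENNReal.ofReal (xiTail p k) := by
    rw [hc, hrow.meas_biInter (s := fun m : ℕ => {ω : Cfg | ω (-k) (m - k) = false})
        fun m _ => ⟨{false}, trivial, rfl⟩, xiTail,
      ENNReal.ofReal_prod_of_nonneg fun m _ => sub_nonneg.2 (hp m).2.le]
    refine prod_congr rfl fun m hm' => ?_
    rw [measure_edge_absent hp hm (by simp at hm'; omega)]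
    congr 3
    omega
  rw [← compl_compl (rowEvent k), prob_compl_eq_one_sub (measurableSet_rowEvent k).compl, hcompl,
    ← ENNReal.ofReal_one, ← ENNReal.ofReal_sub _ (xiTail_nonneg hp k)]

lemma measure_leadsUpTo (hp : ∀ k, 0 ≤ p k ∧ p k < 1) (hm : GraphModel p μ) (n : ℕ) :
    μ (leadsUpTo n) = ENNReal.ofReal (∏ k ∈ range n, (1 - xiTail p (k + 1))) := by
  have hrows : Pairwise (Disjoint on fun k : ℕ => {e : ℤ × ℤ | e.1 = -((k + 1 : ℕ) : ℤ)}) :=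
    fun a b hab => Set.disjoint_left.2 fun e ha hb => hab (by simp_all)
  rw [leadsUpTo_eq_biInter_rowEvent, hm.2.1.iIndep.measure_biInter_of_pairwise_disjoint
      (fun e => (measurable_edge e.1 e.2).comap_le) hrows
      (fun k => measurableSet_rowEvent_row (k + 1)),
    ENNReal.ofReal_prod_of_nonneg fun k _ => sub_nonneg.2 (xiTail_le_one hp _)]
  exact prod_congr rfl fun k _ => measure_rowEvent hp hm (k + 1)

lemma measure_leadsAll (hp : ∀ k, 0 ≤ p k ∧ p k < 1) (hm : GraphModel p μ) {L : ℝ}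
    (hL : Tendsto (fun n => ∏ k ∈ range n, (1 - xiTail p (k + 1))) atTop (𝓝 L)) :
    μ leadsAll = ENNReal.ofReal L := by
  have := hm.1
  have hanti : Antitone leadsUpTo := fun a b hab ω h k hk hkb => h k hk (hkb.trans hab)
  refine tendsto_nhds_unique (tendsto_measure_iInter_atTop
    (fun n => (measurableSet_leadsUpTo n).nullMeasurableSet) hanti ⟨0, measure_ne_top μ _⟩) ?_
  simpa only [Function.comp_def, measure_leadsUpTo hp hm] using ENNReal.tendsto_ofReal hL

lemma measureReal_leadsUpTo_sdiff_div_compl (hp : ∀ k, 0 ≤ p k ∧ p k < 1)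
    (hm : GraphModel p μ) {L : ℝ}
    (hL : Tendsto (fun n => ∏ k ∈ range n, (1 - xiTail p (k + 1))) atTop (𝓝 L)) (n : ℕ) :
    μ.real (leadsUpTo n \ leadsAll) / μ.real leadsAllᶜ =
      ((∏ k ∈ range n, (1 - xiTail p (k + 1))) - L) / (1 - L) := by
  have := hm.1
  have hg₁ : ∀ k, xiTail p (k + 1) ≤ 1 := fun k => xiTail_le_one hp (k + 1)
  have hL₀ : 0 ≤ L := ge_of_tendsto' hL (prod_range_one_sub_nonneg hg₁)
  have hmeas : MeasurableSet leadsAll := .iInter measurableSet_leadsUpTo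
  rw [measureReal_sdiff (leadsAll_subset_leadsUpTo n) hmeas, probReal_compl_eq_one_sub hmeas,
    measureReal_def, measureReal_def, measure_leadsUpTo hp hm, measure_leadsAll hp hm hL,
    ENNReal.toReal_ofReal (prod_range_one_sub_nonneg hg₁ n), ENNReal.toReal_ofReal hL₀]

end Model

lemma setOf_leadsUpTo_and_exists_not_leads (n : ℕ) :
    {ω | (∀ k : ℕ, 1 ≤ k → k ≤ n → Leads ω (-(k : ℤ)) 0) ∧
      ∃ m : ℕ, n < m ∧ ¬ Leads ω (-(m : ℤ)) 0} = leadsUpTo n \ leadsAll := by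
  ext ω
  simp only [leadsAll, leadsUpTo, Set.mem_sdiff, Set.mem_iInter, Set.mem_ofPred_eq, not_forall]
  refine and_congr_right fun h => ⟨fun ⟨m, hnm, hm⟩ => ⟨m, m, by omega, le_rfl, hm⟩, ?_⟩
  rintro ⟨N, m, hm, hmN, hleads⟩
  exact ⟨m, not_le.1 fun hmn => hleads (h m hm hmn), hleads⟩

lemma setOf_exists_not_leads :
    {ω | ∃ m : ℕ, 0 < m ∧ ¬ Leads ω (-(m : ℤ)) 0} = leadsAllᶜ := by
  ext ω
  simp only [leadsAll, leadsUpTo, Set.mem_compl_iff, Set.mem_iInter, Set.mem_ofPred_eq, not_forall]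
  exact ⟨fun ⟨m, hm, hleads⟩ => ⟨m, m, hm, le_rfl, hleads⟩,
    fun ⟨_, m, hm, _, hleads⟩ => ⟨m, hm, hleads⟩⟩

/-- the conditional tail of `μ` is comparable to the integrated
tail of `ξ`. -/
theorem stmt_9 (p : ℕ → ℝ) (hp : ∀ k, 0 ≤ p k ∧ p k < 1)
    (hp1 : 0 < p 1)
    (hsum : Summable (fun k : ℕ => ∏ m ∈ Finset.Icc 1 (k + 1), (1 - p m)))
    (μ : Measure Cfg) (hmodel : GraphModel p μ) :
    ∃ C₁ C₂ : ℝ, 0 < C₁ ∧ C₁ < C₂ ∧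
      ∀ n : ℕ,
        C₁ * (∑' m : ℕ, ∏ j ∈ Finset.Icc 1 (n + 1 + m), (1 - p j)) ≤
          (μ {ω | (∀ k : ℕ, 1 ≤ k → k ≤ n → Leads ω (-(k : ℤ)) 0) ∧
              ∃ m : ℕ, n < m ∧ ¬ Leads ω (-(m : ℤ)) 0}).toReal /
            (μ {ω | ∃ m : ℕ, 0 < m ∧ ¬ Leads ω (-(m : ℤ)) 0}).toReal ∧
        (μ {ω | (∀ k : ℕ, 1 ≤ k → k ≤ n → Leads ω (-(k : ℤ)) 0) ∧
              ∃ m : ℕ, n < m ∧ ¬ Leads ω (-(m : ℤ)) 0}).toReal /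
            (μ {ω | ∃ m : ℕ, 0 < m ∧ ¬ Leads ω (-(m : ℤ)) 0}).toReal ≤
          C₂ * (∑' m : ℕ, ∏ j ∈ Finset.Icc 1 (n + 1 + m), (1 - p j)) := by
  set g : ℕ → ℝ := fun k => xiTail p (k + 1)
  have hg₀ : ∀ k, 0 ≤ g k := fun k => xiTail_nonneg hp (k + 1)
  have hg₁ : ∀ k, g k < 1 := xiTail_succ_lt_one hp hp1
  obtain ⟨L, hL₀, hL⟩ := exists_tendsto_prod_range_one_sub_pos hg₁ hsum
  have hL₁ : L < 1 := by
    have := (antitone_prod_range_one_sub hg₀ fun k => (hg₁ k).le).le_of_tendsto hL 1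
    simp only [range_one, prod_singleton, g, xiTail, Icc_self] at this
    linarith [(hp 1).2]
  refine ⟨L / (1 - L), 1 / (1 - L), div_pos hL₀ (sub_pos.2 hL₁),
    div_lt_div_of_pos_right hL₁ (sub_pos.2 hL₁), fun n => ?_⟩
  have htail : ∑' m : ℕ, ∏ j ∈ Icc 1 (n + 1 + m), (1 - p j) = ∑' m, g (n + m) :=
    tsum_congr fun m => by rw [add_right_comm]; rfl
  obtain ⟨hlow, hupp⟩ := prod_range_one_sub_sub_mem_Icc hg₀ (fun k => (hg₁ k).le) hsum hL n
  rw [setOf_leadsUpTo_and_exists_not_leads, setOf_exists_not_leads, ← measureReal_def,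
    ← measureReal_def, measureReal_leadsUpTo_sdiff_div_compl hp hmodel hL, htail,
    div_mul_eq_mul_div, div_mul_eq_mul_div, one_mul]
  exact ⟨by gcongr, by gcongr⟩
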